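/- Let Ω be a bounded open subset of ℝ^N (N ≥ 3) and let p₁, p₂, q : closure(Ω) → ℝ be continuous functions satisfying 1 < p₂(x) < q⁻ ≤ q⁺ < p₁(x) < N and q⁺ < N p₂(x)/(N − p₂(x)) for all x ∈ closure(Ω), where q⁻ = min_{closure(Ω)} q and q⁺ = max_{closure(Ω)} q. For u : ℝ^N → ℝ of class C¹ with compact support contained in Ω, set J(u) = ∫_Ω (1/p₁(x))|Du|^{p₁(x)} dx + ∫_Ω (1/p₂(x))|Du|^{p₂(x)} dx, I(u) = ∫_Ω (1/q(x))|u|^{q(x)} dx, and ‖u‖ = inf { μ > 0 : ∫_Ω (|Du(x)|/μ)^{p₁(x)} dx ≤ 1 }. Then for every M > 0 there exists δ > 0 such that every such u which is not identically zero and satisfies ‖u‖ ≤ δ obeys J(u) ≥ M · I(u). -/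

import Mathlib

open MeasureTheory ENNReal

/-- `J(u) = ∫_Ω (1/p₁(x))|Du|^{p₁(x)} dx + ∫_Ω (1/p₂(x))|Du|^{p₂(x)} dx`. -/
noncomputable def Jfun (N : ℕ) (Ω : Set (EuclideanSpace ℝ (Fin N)))
    (p₁ p₂ : EuclideanSpace ℝ (Fin N) → ℝ) (u : EuclideanSpace ℝ (Fin N) → ℝ) : ℝ≥0∞ :=
  (∫⁻ x in Ω, ENNReal.ofReal ((1 / p₁ x) * ‖fderiv ℝ u x‖ ^ p₁ x)) +
    ∫⁻ x in Ω, ENNReal.ofReal ((1 / p₂ x) * ‖fderiv ℝ u x‖ ^ p₂ x)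

/-- `I(u) = ∫_Ω (1/q(x))|u|^{q(x)} dx`. -/
noncomputable def Ifun (N : ℕ) (Ω : Set (EuclideanSpace ℝ (Fin N)))
    (q : EuclideanSpace ℝ (Fin N) → ℝ) (u : EuclideanSpace ℝ (Fin N) → ℝ) : ℝ≥0∞ :=
  ∫⁻ x in Ω, ENNReal.ofReal ((1 / q x) * |u x| ^ q x)

/-- `‖u‖ = inf { μ > 0 : ∫_Ω (|Du(x)|/μ)^{p₁(x)} dx ≤ 1 }`, the Luxemburg norm of
    `|Du|` with respect to the variable exponent `p₁` on `Ω`. -/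
noncomputable def luxGrad (N : ℕ) (Ω : Set (EuclideanSpace ℝ (Fin N)))
    (p₁ : EuclideanSpace ℝ (Fin N) → ℝ) (u : EuclideanSpace ℝ (Fin N) → ℝ) : ℝ :=
  sInf {m : ℝ | 0 < m ∧
    ∫⁻ x in Ω, ENNReal.ofReal ((‖fderiv ℝ u x‖ / m) ^ p₁ x) ≤ 1}

/-! Let `r` be the maximum of `p₂` on `closure Ω`; then `p₂ ≤ r < q⁻ ≤ q⁺ < p₁` and
`1/r - 1/N ≤ 1/q⁺`. Put `S(u) = ∫_Ω |Du|^r`. Splitting `Ω` according to `|Du| ≤ 1` gives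
`J(u) ≥ S(u)/N`, while the Gagliardo–Nirenberg–Sobolev inequality for the exponents `q⁻, q⁺`
gives `I(u) ≤ C (S^{q⁻/r} + S^{q⁺/r})`, which is superlinear in `S` because `q^± > r`.
Finally `‖u‖ < t` forces `S(u) ≤ t^r (|Ω| + 1)`, since `|Du|^r ≤ m^r (1 + (|Du|/m)^{p₁})` for
every `m` admissible in the Luxemburg norm. Hence `M I(u) ≤ S(u)/N ≤ J(u)` once `‖u‖` is small. -/

open NNReal Filter Topology

theorem Real.rpow_le_rpow_add_rpow {x a b c : ℝ} (hx : 0 ≤ x) (ha : 0 ≤ a) (hab : a ≤ b)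
    (hbc : b ≤ c) : x ^ b ≤ x ^ a + x ^ c := by
  rcases le_or_gt x 1 with hx1 | hx1
  · exact (Real.rpow_le_rpow_of_exponent_ge' hx hx1 ha hab).trans
      (le_add_of_nonneg_right (by positivity))
  · exact (Real.rpow_le_rpow_of_exponent_le hx1.le hbc).trans
      (le_add_of_nonneg_left (by positivity))

theorem Real.inv_sub_inv_le_inv_of_le_mul_div {r n e : ℝ} (hr : 0 < r) (hrn : r < n)
    (he : 0 < e) (h : e ≤ n * r / (n - r)) : r⁻¹ - n⁻¹ ≤ e⁻¹ := by
  rw [le_div_iff₀ (sub_pos.2 hrn)] at h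
  rw [inv_sub_inv hr.ne' (hr.trans hrn).ne', div_le_iff₀ (by nlinarith), inv_mul_eq_div,
    le_div_iff₀ he]
  linarith

theorem exists_intermediate_sobolev_exponent {X : Type*} [TopologicalSpace X] {K : Set X}
    (hK : IsCompact K) (hKne : K.Nonempty) {p₁ p₂ : X → ℝ} (hp₂ : ContinuousOn p₂ K)
    {a b n : ℝ} (hab : a ≤ b) (hp : ∀ x ∈ K, 1 < p₂ x ∧ p₂ x < a ∧ b < p₁ x ∧ p₁ x < n)
    (hcrit : ∀ x ∈ K, b < n * p₂ x / (n - p₂ x)) :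
    ∃ r, 1 < r ∧ r < a ∧ r < n ∧ r⁻¹ - n⁻¹ ≤ b⁻¹ ∧ ∀ x ∈ K, p₂ x ≤ r ∧ r ≤ p₁ x := by
  obtain ⟨z, hz, hzmax⟩ := hK.exists_isMaxOn hKne hp₂
  obtain ⟨hr, hra, hbp₁, hp₁n⟩ := hp z hz
  have hrn : p₂ z < n := by linarith
  refine ⟨p₂ z, hr, hra, hrn, Real.inv_sub_inv_le_inv_of_le_mul_div (by linarith) hrn
    (by linarith) (hcrit z hz).le, fun x hx => ⟨hzmax hx, ?_⟩⟩
  linarith [(hp x hx).2.2.1]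

namespace MeasureTheory

variable {X : Type*} [MeasurableSpace X] {μ : Measure X} {s : Set X}

theorem inv_mul_setLIntegral_rpow_le_add (hs : MeasurableSet s) {f p₁ p₂ : X → ℝ}
    (hf : Measurable f) (hf₀ : ∀ x, 0 ≤ f x) {r K : ℝ}
    (hp : ∀ x ∈ s, 0 < p₂ x ∧ p₂ x ≤ r ∧ r ≤ p₁ x ∧ p₁ x ≤ K) :
    ENNReal.ofReal K⁻¹ * ∫⁻ x in s, ENNReal.ofReal (f x ^ r) ∂μ ≤
      (∫⁻ x in s, ENNReal.ofReal ((1 / p₁ x) * f x ^ p₁ x) ∂μ) +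
        ∫⁻ x in s, ENNReal.ofReal ((1 / p₂ x) * f x ^ p₂ x) ∂μ := by
  set small := {x | f x ≤ 1}
  have hsmall : MeasurableSet small := measurableSet_le hf measurable_const
  rw [← lintegral_const_mul' _ _ ENNReal.ofReal_ne_top,
    ← lintegral_inter_add_sdiff _ s hsmall, add_comm]
  refine add_le_add ?_ ?_
  · refine (setLIntegral_mono' (hs.diff hsmall) fun x hx => ?_).trans
      (lintegral_mono_set Set.sdiff_subset)
    obtain ⟨hp₂, hp₂r, hrp₁, hp₁K⟩ := hp x hx.1
    have hfx : 1 < f x := lt_of_not_ge hx.2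
    rw [← ENNReal.ofReal_mul (inv_nonneg.2 (by linarith))]
    refine ENNReal.ofReal_le_ofReal (mul_le_mul ?_ ?_ (Real.rpow_nonneg (hf₀ x) _)
      (one_div_nonneg.2 (by linarith)))
    · rw [one_div]; exact inv_anti₀ (by linarith) hp₁K
    · exact Real.rpow_le_rpow_of_exponent_le hfx.le hrp₁
  · refine (setLIntegral_mono' (hs.inter hsmall) fun x hx => ?_).trans
      (lintegral_mono_set Set.inter_subset_left)
    obtain ⟨hp₂, hp₂r, hrp₁, hp₁K⟩ := hp x hx.1
    rw [← ENNReal.ofReal_mul (inv_nonneg.2 (by linarith))]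
    refine ENNReal.ofReal_le_ofReal (mul_le_mul ?_ ?_ (Real.rpow_nonneg (hf₀ x) _)
      (one_div_nonneg.2 hp₂.le))
    · rw [one_div]; exact inv_anti₀ hp₂ (hp₂r.trans (hrp₁.trans hp₁K))
    · exact Real.rpow_le_rpow_of_exponent_ge' (hf₀ x) hx.2 hp₂.le hp₂r

theorem setLIntegral_rpow_le_of_setLIntegral_div_rpow_le_one (hs : MeasurableSet s)
    {f p : X → ℝ} (hf₀ : ∀ x ∈ s, 0 ≤ f x) {r m : ℝ} (hr : 0 ≤ r) (hm : 0 < m)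
    (hrp : ∀ x ∈ s, r ≤ p x) (hmod : ∫⁻ x in s, ENNReal.ofReal ((f x / m) ^ p x) ∂μ ≤ 1) :
    ∫⁻ x in s, ENNReal.ofReal (f x ^ r) ∂μ ≤ ENNReal.ofReal (m ^ r) * (μ s + 1) := by
  have hpt : ∀ x ∈ s, ENNReal.ofReal (f x ^ r) ≤
      ENNReal.ofReal (m ^ r) * (1 + ENNReal.ofReal ((f x / m) ^ p x)) := by
    intro x hx
    have hfm : 0 ≤ f x / m := div_nonneg (hf₀ x hx) hm.le
    calc ENNReal.ofReal (f x ^ r) = ENNReal.ofReal (m ^ r * (f x / m) ^ r) := by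
          rw [Real.div_rpow (hf₀ x hx) hm.le, mul_div_cancel₀ _ (by positivity)]
      _ ≤ ENNReal.ofReal (m ^ r * ((f x / m) ^ (0 : ℝ) + (f x / m) ^ p x)) := by
          gcongr
          exact Real.rpow_le_rpow_add_rpow hfm le_rfl hr (hrp x hx)
      _ = ENNReal.ofReal (m ^ r) * (1 + ENNReal.ofReal ((f x / m) ^ p x)) := by
          rw [Real.rpow_zero, ENNReal.ofReal_mul (by positivity),
            ENNReal.ofReal_add zero_le_one (by positivity), ENNReal.ofReal_one]
  calc ∫⁻ x in s, ENNReal.ofReal (f x ^ r) ∂μ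
      ≤ ∫⁻ x in s, ENNReal.ofReal (m ^ r) * (1 + ENNReal.ofReal ((f x / m) ^ p x)) ∂μ :=
        setLIntegral_mono' hs hpt
    _ = ENNReal.ofReal (m ^ r) * (μ s + ∫⁻ x in s, ENNReal.ofReal ((f x / m) ^ p x) ∂μ) := by
        rw [lintegral_const_mul' _ _ ENNReal.ofReal_ne_top, lintegral_add_left measurable_const,
          setLIntegral_const, one_mul]
    _ ≤ ENNReal.ofReal (m ^ r) * (μ s + 1) := by gcongr

theorem exists_setLIntegral_div_rpow_le_one (hs : MeasurableSet s) (hμs : μ s ≠ ⊤)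
    {f p : X → ℝ} {c : ℝ} (hf : ∀ x ∈ s, 0 ≤ f x ∧ f x ≤ c) (hp : ∀ x ∈ s, 1 ≤ p x) :
    ∃ m, 0 < m ∧ ∫⁻ x in s, ENNReal.ofReal ((f x / m) ^ p x) ∂μ ≤ 1 := by
  set V := (μ s).toReal
  have hV : 0 ≤ V := ENNReal.toReal_nonneg
  set m := (|c| + 1) * (V + 1)
  have hm : 0 < m := by positivity
  refine ⟨m, hm, ?_⟩
  have hpt : ∀ x ∈ s, ENNReal.ofReal ((f x / m) ^ p x) ≤ ENNReal.ofReal (V + 1)⁻¹ := by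
    intro x hx
    have hfm : f x / m ≤ (V + 1)⁻¹ := by
      rw [div_le_iff₀ hm, inv_mul_eq_div, mul_div_cancel_right₀ _ (by positivity)]
      linarith [(hf x hx).2, le_abs_self c]
    refine ENNReal.ofReal_le_ofReal ?_
    calc (f x / m) ^ p x ≤ (f x / m) ^ (1 : ℝ) :=
          Real.rpow_le_rpow_of_exponent_ge' (div_nonneg (hf x hx).1 hm.le)
            (hfm.trans (inv_le_one_of_one_le₀ (by linarith))) zero_le_one (hp x hx)
      _ ≤ (V + 1)⁻¹ := by rwa [Real.rpow_one]
  calc ∫⁻ x in s, ENNReal.ofReal ((f x / m) ^ p x) ∂μ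
      ≤ ∫⁻ _ in s, ENNReal.ofReal (V + 1)⁻¹ ∂μ := setLIntegral_mono' hs hpt
    _ = ENNReal.ofReal ((V + 1)⁻¹ * V) := by
        rw [setLIntegral_const, ENNReal.ofReal_mul (by positivity), ENNReal.ofReal_toReal hμs]
    _ ≤ 1 := ENNReal.ofReal_le_one.2 <| by
        rw [inv_mul_le_iff₀ (by positivity)]; linarith

end MeasureTheory

open MeasureTheory

theorem setLIntegral_norm_fderiv_rpow_le_of_luxGrad_lt {N : ℕ}
    {Ω : Set (EuclideanSpace ℝ (Fin N))} (hΩ : MeasurableSet Ω) (hΩfin : volume Ω ≠ ⊤)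
    {p₁ u : EuclideanSpace ℝ (Fin N) → ℝ} (hu : ContDiff ℝ 1 u) (hcs : HasCompactSupport u)
    {r t : ℝ} (hr : 1 ≤ r) (hrp : ∀ x ∈ Ω, r ≤ p₁ x) (hlux : luxGrad N Ω p₁ u < t) :
    ∫⁻ x in Ω, ENNReal.ofReal (‖fderiv ℝ u x‖ ^ r) ≤
      ENNReal.ofReal (t ^ r) * (volume Ω + 1) := by
  obtain ⟨c, hc⟩ :=
    (hu.continuous_fderiv one_ne_zero).bounded_above_of_compact_support (hcs.fderiv ℝ)
  obtain ⟨m₀, hm₀⟩ := exists_setLIntegral_div_rpow_le_one hΩ hΩfin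
    (fun x _ => ⟨norm_nonneg _, hc x⟩) fun x hx => hr.trans (hrp x hx)
  obtain ⟨m, ⟨hm, hmod⟩, hmt⟩ := exists_lt_of_csInf_lt ⟨m₀, hm₀⟩ hlux
  calc ∫⁻ x in Ω, ENNReal.ofReal (‖fderiv ℝ u x‖ ^ r)
      ≤ ENNReal.ofReal (m ^ r) * (volume Ω + 1) :=
        setLIntegral_rpow_le_of_setLIntegral_div_rpow_le_one hΩ (fun _ _ => norm_nonneg _)
          (by linarith) hm hrp hmod
    _ ≤ ENNReal.ofReal (t ^ r) * (volume Ω + 1) := by gcongr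

theorem Ifun_le {N : ℕ} {Ω : Set (EuclideanSpace ℝ (Fin N))} (hΩ : MeasurableSet Ω)
    {q u : EuclideanSpace ℝ (Fin N) → ℝ} (hu : Measurable u) {a b : ℝ} (ha : 0 < a)
    (hq : ∀ x ∈ Ω, a ≤ q x ∧ q x ≤ b) :
    Ifun N Ω q u ≤ ENNReal.ofReal a⁻¹ *
      ((∫⁻ x in Ω, ENNReal.ofReal (|u x| ^ a)) + ∫⁻ x in Ω, ENNReal.ofReal (|u x| ^ b)) := by
  have hpt : ∀ x ∈ Ω, ENNReal.ofReal ((1 / q x) * |u x| ^ q x) ≤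
      ENNReal.ofReal a⁻¹ * (ENNReal.ofReal (|u x| ^ a) + ENNReal.ofReal (|u x| ^ b)) := by
    intro x hx
    obtain ⟨haq, hqb⟩ := hq x hx
    rw [← ENNReal.ofReal_add (by positivity) (by positivity),
      ← ENNReal.ofReal_mul (by positivity)]
    refine ENNReal.ofReal_le_ofReal (mul_le_mul ?_ ?_ (by positivity) (by positivity))
    · rw [one_div]; exact inv_anti₀ ha haq
    · exact Real.rpow_le_rpow_add_rpow (abs_nonneg _) ha.le haq hqb
  refine (setLIntegral_mono' hΩ hpt).trans_eq ?_
  rw [lintegral_const_mul' _ _ ENNReal.ofReal_ne_top,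
    lintegral_add_left (by fun_prop)]

theorem lintegral_ofReal_norm_rpow_eq_eLpNorm_rpow {F : Type*} [NormedAddCommGroup F]
    (f : X → F) {p : ℝ} (hp : 0 < p) :
    ∫⁻ x, ENNReal.ofReal (‖f x‖ ^ p) ∂μ = eLpNorm f p.toNNReal μ ^ p := by
  have h := eLpNorm_nnreal_pow_eq_lintegral (f := f) (μ := μ) (p := p.toNNReal) (by simpa using hp)
  rw [Real.coe_toNNReal _ hp.le] at h
  rw [h]
  congr with x
  rw [← ofReal_norm, ENNReal.ofReal_rpow_of_nonneg (norm_nonneg _) hp.le]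

theorem exists_setLIntegral_abs_rpow_le_sobolev {E : Type*} [NormedAddCommGroup E]
    [NormedSpace ℝ E] [MeasurableSpace E] [BorelSpace E] [FiniteDimensional ℝ E]
    (μ : Measure E) [μ.IsAddHaarMeasure] {s : Set E} (hs : Bornology.IsBounded s) {r e : ℝ}
    (hr : 1 ≤ r) (hrn : r < Module.finrank ℝ E) (he : 0 < e)
    (hre : r⁻¹ - (Module.finrank ℝ E : ℝ)⁻¹ ≤ e⁻¹) :
    ∃ C : ℝ≥0, ∀ u : E → ℝ, ContDiff ℝ 1 u → tsupport u ⊆ s →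
      ∫⁻ x in s, ENNReal.ofReal (|u x| ^ e) ∂μ ≤
        C * (∫⁻ x in s, ENNReal.ofReal (‖fderiv ℝ u x‖ ^ r) ∂μ) ^ (e / r) := by
  set C := eLpNormLESNormFDerivOfLeConst ℝ μ s r.toNNReal e.toNNReal
  refine ⟨C ^ e, fun u hu hsupp => ?_⟩
  have hr₀ : 0 < r := by linarith
  have hsob := eLpNorm_le_eLpNorm_fderiv_of_le μ hu ((subset_tsupport u).trans hsupp)
    (p := r.toNNReal) (q := e.toNNReal) (Real.one_le_toNNReal.2 hr)
    (by rw [← NNReal.coe_lt_coe]; simpa [hr₀.le] using hrn)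
    (by simpa [hr₀.le, he.le] using hre) hs
  have hDu : ∫⁻ x in s, ENNReal.ofReal (‖fderiv ℝ u x‖ ^ r) ∂μ =
      ∫⁻ x, ENNReal.ofReal (‖fderiv ℝ u x‖ ^ r) ∂μ := by
    refine setLIntegral_eq_of_support_subset fun x hx => hsupp (support_fderiv_subset ℝ ?_)
    by_contra h
    simp [Function.notMem_support.1 h, Real.zero_rpow hr₀.ne'] at hx
  calc ∫⁻ x in s, ENNReal.ofReal (|u x| ^ e) ∂μ ≤ ∫⁻ x, ENNReal.ofReal (‖u x‖ ^ e) ∂μ :=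
        setLIntegral_le_lintegral _ _
    _ = eLpNorm u e.toNNReal μ ^ e := lintegral_ofReal_norm_rpow_eq_eLpNorm_rpow u he
    _ ≤ ((C : ℝ≥0∞) * eLpNorm (fderiv ℝ u) r.toNNReal μ) ^ e := by gcongr
    _ = _ := by
        rw [hDu, lintegral_ofReal_norm_rpow_eq_eLpNorm_rpow _ hr₀, ← ENNReal.rpow_mul,
          mul_div_cancel₀ _ hr₀.ne', ENNReal.mul_rpow_of_nonneg _ _ he.le,
          ENNReal.coe_rpow_of_nonneg _ he.le]

theorem exists_Ifun_le_sobolev {N : ℕ} {Ω : Set (EuclideanSpace ℝ (Fin N))}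
    (hΩ : MeasurableSet Ω) (hΩb : Bornology.IsBounded Ω) {q : EuclideanSpace ℝ (Fin N) → ℝ}
    {a b r : ℝ} (ha : 0 < a) (hab : a ≤ b) (hq : ∀ x ∈ Ω, a ≤ q x ∧ q x ≤ b) (hr : 1 ≤ r)
    (hrN : r < N) (hrb : r⁻¹ - (N : ℝ)⁻¹ ≤ b⁻¹) :
    ∃ Ca Cb : ℝ≥0, ∀ u : EuclideanSpace ℝ (Fin N) → ℝ, ContDiff ℝ 1 u → tsupport u ⊆ Ω →
      Ifun N Ω q u ≤
        Ca * (∫⁻ x in Ω, ENNReal.ofReal (‖fderiv ℝ u x‖ ^ r)) ^ (a / r) +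
          Cb * (∫⁻ x in Ω, ENNReal.ofReal (‖fderiv ℝ u x‖ ^ r)) ^ (b / r) := by
  have hfin : (Module.finrank ℝ (EuclideanSpace ℝ (Fin N)) : ℝ) = N := by simp
  rw [← hfin] at hrN hrb
  obtain ⟨Ca, hCa⟩ := exists_setLIntegral_abs_rpow_le_sobolev volume hΩb hr hrN ha
    (hrb.trans (inv_anti₀ ha hab))
  obtain ⟨Cb, hCb⟩ := exists_setLIntegral_abs_rpow_le_sobolev volume hΩb hr hrN
    (ha.trans_le hab) hrb
  refine ⟨a⁻¹.toNNReal * Ca, a⁻¹.toNNReal * Cb, fun u hu hsupp => ?_⟩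
  calc Ifun N Ω q u
      ≤ ENNReal.ofReal a⁻¹ * ((∫⁻ x in Ω, ENNReal.ofReal (|u x| ^ a)) +
          ∫⁻ x in Ω, ENNReal.ofReal (|u x| ^ b)) := Ifun_le hΩ hu.continuous.measurable ha hq
    _ ≤ ENNReal.ofReal a⁻¹ * (Ca * (∫⁻ x in Ω, ENNReal.ofReal (‖fderiv ℝ u x‖ ^ r)) ^ (a / r) +
          Cb * (∫⁻ x in Ω, ENNReal.ofReal (‖fderiv ℝ u x‖ ^ r)) ^ (b / r)) := by
        gcongr
        exacts [hCa u hu hsupp, hCb u hu hsupp]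
    _ = _ := by rw [ENNReal.ofReal, ENNReal.coe_mul, ENNReal.coe_mul]; ring

theorem tendsto_ofReal_rpow_mul_nhds_zero {r : ℝ} (hr : 0 < r) {c : ℝ≥0∞} (hc : c ≠ ⊤) :
    Tendsto (fun t : ℝ => ENNReal.ofReal (t ^ r) * c) (𝓝 0) (𝓝 0) := by
  have h := ENNReal.Tendsto.mul_const (ENNReal.tendsto_ofReal
    (Real.continuousAt_rpow_const 0 r (Or.inr hr.le)).tendsto) (Or.inr hc)
  simpa [Real.zero_rpow hr.ne'] using h

theorem ENNReal.eventually_forall_le_mul_rpow_add_mul_rpow_le {A B κ : ℝ≥0∞} (hA : A ≠ ⊤)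
    (hB : B ≠ ⊤) (hκ : κ ≠ 0) {a b : ℝ} (ha : 1 < a) (hb : 1 < b) :
    ∀ᶠ ε in 𝓝 (0 : ℝ≥0∞), ∀ S ≤ ε, A * S ^ a + B * S ^ b ≤ κ * S := by
  have hlim : Tendsto (fun S : ℝ≥0∞ => A * S ^ (a - 1) + B * S ^ (b - 1)) (𝓝 0) (𝓝 0) := by
    have hpow : ∀ k : ℝ, 0 < k → Tendsto (fun S : ℝ≥0∞ => S ^ k) (𝓝 0) (𝓝 0) := fun k hk => by
      simpa [ENNReal.zero_rpow_of_pos hk] using (ENNReal.continuous_rpow_const (y := k)).tendsto 0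
    simpa using ((ENNReal.Tendsto.const_mul (hpow _ (by linarith)) (Or.inr hA)).add
      (ENNReal.Tendsto.const_mul (hpow _ (by linarith)) (Or.inr hB)))
  obtain ⟨ε₀, hε₀, hsmall⟩ :=
    ENNReal.nhds_zero_basis.eventually_iff.1 (hlim.eventually (gt_mem_nhds (pos_iff_ne_zero.2 hκ)))
  filter_upwards [gt_mem_nhds hε₀] with ε hε S hS
  calc A * S ^ a + B * S ^ b = (A * S ^ (a - 1) + B * S ^ (b - 1)) * S := by
        have hsplit : ∀ k : ℝ, 1 < k → S ^ k = S ^ (k - 1) * S := fun k hk => by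
          conv_lhs => rw [← sub_add_cancel k 1]
          rw [ENNReal.rpow_add_of_nonneg _ _ (by linarith) zero_le_one, ENNReal.rpow_one]
        rw [hsplit a ha, hsplit b hb, add_mul, mul_assoc, mul_assoc]
    _ ≤ κ * S := by gcongr; exact (hsmall (hS.trans_lt hε)).le

theorem stmt9_general (N : ℕ) (Ω : Set (EuclideanSpace ℝ (Fin N)))
    (hΩo : IsOpen Ω) (hΩb : Bornology.IsBounded Ω)
    (p₁ p₂ q : EuclideanSpace ℝ (Fin N) → ℝ)
    (hp₂ : ContinuousOn p₂ (closure Ω))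
    (qm qp : ℝ) (hqm : IsLeast (q '' closure Ω) qm)
    (hqp : IsGreatest (q '' closure Ω) qp)
    (hcond : ∀ x ∈ closure Ω, 1 < p₂ x ∧ p₂ x < qm ∧ qp < p₁ x ∧ p₁ x < N)
    (hcrit : ∀ x ∈ closure Ω, qp < N * p₂ x / (N - p₂ x)) :
    ∀ M : ℝ, 0 < M → ∃ δ : ℝ, 0 < δ ∧
      ∀ u : EuclideanSpace ℝ (Fin N) → ℝ,
        ContDiff ℝ 1 u → HasCompactSupport u → tsupport u ⊆ Ω → u ≠ 0 →
        luxGrad N Ω p₁ u ≤ δ →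
        ENNReal.ofReal M * Ifun N Ω q u ≤ Jfun N Ω p₁ p₂ u := by
  intro M _
  have hΩ := hΩo.measurableSet
  have hqmqp : qm ≤ qp := hqp.2 hqm.1
  obtain ⟨r, hr, hrqm, hrN, hrqp, hpr⟩ := exists_intermediate_sobolev_exponent
    hΩb.isCompact_closure (hqm.1.imp fun _ hx => hx.1) hp₂ hqmqp hcond hcrit
  have hpΩ : ∀ x ∈ Ω, 0 < p₂ x ∧ p₂ x ≤ r ∧ r ≤ p₁ x ∧ p₁ x ≤ N := fun x hx =>
    ⟨by linarith [hcond x (subset_closure hx)], (hpr x (subset_closure hx)).1,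
      (hpr x (subset_closure hx)).2, (hcond x (subset_closure hx)).2.2.2.le⟩
  obtain ⟨Cm, Cp, hI⟩ := exists_Ifun_le_sobolev hΩ hΩb (by linarith) hqmqp
    (fun x hx => ⟨hqm.2 ⟨x, subset_closure hx, rfl⟩, hqp.2 ⟨x, subset_closure hx, rfl⟩⟩)
    hr.le hrN hrqp
  have hΩfin : volume Ω ≠ ⊤ := hΩb.measure_lt_top.ne
  have hg : Tendsto (fun t : ℝ => ENNReal.ofReal (t ^ r) * (volume Ω + 1)) (𝓝[>] 0) (𝓝 0) :=
    (tendsto_ofReal_rpow_mul_nhds_zero (by linarith) (by finiteness)).mono_left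
      nhdsWithin_le_nhds
  have hsuperlinear := ENNReal.eventually_forall_le_mul_rpow_add_mul_rpow_le
    (A := ENNReal.ofReal M * Cm) (B := ENNReal.ofReal M * Cp) (κ := ENNReal.ofReal (N : ℝ)⁻¹)
    (a := qm / r) (b := qp / r) (by finiteness) (by finiteness)
    (ENNReal.ofReal_pos.2 (inv_pos.2 (by linarith))).ne'
    ((one_lt_div (by linarith)).2 hrqm)
    ((one_lt_div (by linarith)).2 (by linarith))
  obtain ⟨t, hsmall, ht⟩ := ((hg.eventually hsuperlinear).and self_mem_nhdsWithin).exists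
  refine ⟨t / 2, half_pos ht, fun u hu hcs hts _ hlux => ?_⟩
  set S := ∫⁻ x in Ω, ENNReal.ofReal (‖fderiv ℝ u x‖ ^ r)
  have hS : S ≤ ENNReal.ofReal (t ^ r) * (volume Ω + 1) :=
    setLIntegral_norm_fderiv_rpow_le_of_luxGrad_lt hΩ hΩfin hu hcs hr.le
      (fun x hx => (hpΩ x hx).2.2.1) (hlux.trans_lt (half_lt_self ht))
  calc ENNReal.ofReal M * Ifun N Ω q u
      ≤ ENNReal.ofReal M * Cm * S ^ (qm / r) + ENNReal.ofReal M * Cp * S ^ (qp / r) := by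
        rw [mul_assoc, mul_assoc, ← mul_add]
        exact mul_le_mul_right (hI u hu hts) _
    _ ≤ ENNReal.ofReal (N : ℝ)⁻¹ * S := hsmall S hS
    _ ≤ Jfun N Ω p₁ p₂ u := inv_mul_setLIntegral_rpow_le_add hΩ
        (hu.continuous_fderiv one_ne_zero).norm.measurable (fun _ => norm_nonneg _) hpΩ

/-- Under `1 < p₂(x) < q⁻ ≤ q⁺ < p₁(x) < N` and `q⁺ < Np₂(x)/(N-p₂(x))` on
    `closure Ω`, `J(u)/I(u) → ∞` as `‖u‖ → 0`: for every `M > 0` there is `δ > 0`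
    such that every nontrivial `C¹` function `u` with compact support in `Ω` and
    `‖u‖ ≤ δ` satisfies `J(u) ≥ M I(u)`. -/
theorem stmt9 (N : ℕ) (hN : 3 ≤ N) (Ω : Set (EuclideanSpace ℝ (Fin N)))
    (hΩo : IsOpen Ω) (hΩb : Bornology.IsBounded Ω)
    (p₁ p₂ q : EuclideanSpace ℝ (Fin N) → ℝ)
    (hp₁ : ContinuousOn p₁ (closure Ω)) (hp₂ : ContinuousOn p₂ (closure Ω))
    (hq : ContinuousOn q (closure Ω))
    (qm qp : ℝ) (hqm : IsLeast (q '' closure Ω) qm)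
    (hqp : IsGreatest (q '' closure Ω) qp)
    (hcond : ∀ x ∈ closure Ω, 1 < p₂ x ∧ p₂ x < qm ∧ qp < p₁ x ∧ p₁ x < N)
    (hcrit : ∀ x ∈ closure Ω, qp < N * p₂ x / (N - p₂ x)) :
    ∀ M : ℝ, 0 < M → ∃ δ : ℝ, 0 < δ ∧
      ∀ u : EuclideanSpace ℝ (Fin N) → ℝ,
        ContDiff ℝ 1 u → HasCompactSupport u → tsupport u ⊆ Ω → u ≠ 0 →
        luxGrad N Ω p₁ u ≤ δ →
        ENNReal.ofReal M * Ifun N Ω q u ≤ Jfun N Ω p₁ p₂ u :=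
  stmt9_general N Ω hΩo hΩb p₁ p₂ q hp₂ qm qp hqm hqp hcond hcrit
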